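/- For d = 3 and all z > 0, one has z·|H₃'(z)| ≤ 2·H₃(z), where H₃(z) = 1 − sin(2πz)/(2πz); equivalently the log-log slope z H₃'(z)/H₃(z) lies in [−2, 2]. -/

import Mathlib

open Real

/-- The 3-dimensional Wiener–Khinchin kernel `H₃(σ) = 1 − sin(2πσ)/(2πσ)`,
extended by `H₃(0) = 0`. -/
noncomputable def H₃ (σ : ℝ) : ℝ :=
  if σ = 0 then 0 else 1 - Real.sin (2 * π * σ) / (2 * π * σ)

private lemma pos_of_deriv (f f' : ℝ → ℝ) (hf : ∀ t, HasDerivAt f (f' t) t)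
    (h0 : f 0 = 0) (hpos : ∀ t, 0 ≤ t → 0 ≤ f' t) : ∀ x, 0 ≤ x → 0 ≤ f x := by
  intro x hx
  have hmono : MonotoneOn f (Set.Ici 0) :=
    monotoneOn_of_deriv_nonneg (convex_Ici 0)
      (fun t _ => (hf t).continuousAt.continuousWithinAt)
      (fun t _ => (hf t).differentiableAt.differentiableWithinAt)
      (fun t ht => by
        rw [interior_Ici] at ht
        rw [(hf t).deriv]; exact hpos t ht.le)
  calc (0:ℝ) = f 0 := h0.symm
    _ ≤ f x := hmono (by simp) (by simpa using hx) hx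

private lemma sin_ge_cubic : ∀ x : ℝ, 0 ≤ x → x - x^3/6 ≤ Real.sin x := by
  intro x hx
  have := pos_of_deriv (fun t => Real.sin t - t + t^3/6)
      (fun t => Real.cos t - 1 + t^2/2)
      (fun t => by
        have h1 := ((Real.hasDerivAt_sin t).sub (hasDerivAt_id t)).add
          ((hasDerivAt_pow 3 t).div_const 6)
        exact h1.congr_deriv (by push_cast; ring))
      (by norm_num)
      (fun t _ => by nlinarith [Real.one_sub_sq_div_two_le_cos (x := t)])
      x hx
  linarith

private lemma cos_le_quartic : ∀ x : ℝ, 0 ≤ x → Real.cos x ≤ 1 - x^2/2 + x^4/24 := by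
  intro x hx
  have := pos_of_deriv (fun t => 1 - t^2/2 + t^4/24 - Real.cos t)
      (fun t => -t + t^3/6 + Real.sin t)
      (fun t => by
        have h1 := ((((hasDerivAt_const t (1:ℝ)).sub ((hasDerivAt_pow 2 t).div_const 2)).add
          ((hasDerivAt_pow 4 t).div_const 24)).sub (Real.hasDerivAt_cos t))
        exact h1.congr_deriv (by push_cast; ring))
      (by norm_num)
      (fun t ht => by nlinarith [sin_ge_cubic t ht])
      x hx
  linarith

private lemma sin_le_quintic : ∀ x : ℝ, 0 ≤ x → Real.sin x ≤ x - x^3/6 + x^5/120 := by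
  intro x hx
  have := pos_of_deriv (fun t => t - t^3/6 + t^5/120 - Real.sin t)
      (fun t => 1 - t^2/2 + t^4/24 - Real.cos t)
      (fun t => by
        have h1 := (((hasDerivAt_id t).sub ((hasDerivAt_pow 3 t).div_const 6)).add
          ((hasDerivAt_pow 5 t).div_const 120)).sub (Real.hasDerivAt_sin t)
        exact h1.congr_deriv (by push_cast; ring))
      (by norm_num)
      (fun t ht => by nlinarith [cos_le_quartic t ht])
      x hx
  linarith

private lemma cos_ge_sextic : ∀ x : ℝ, 0 ≤ x → 1 - x^2/2 + x^4/24 - x^6/720 ≤ Real.cos x := by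
  intro x hx
  have := pos_of_deriv (fun t => Real.cos t - 1 + t^2/2 - t^4/24 + t^6/720)
      (fun t => -Real.sin t + t - t^3/6 + t^5/120)
      (fun t => by
        have h1 := (((((Real.hasDerivAt_cos t).sub (hasDerivAt_const t (1:ℝ))).add
          ((hasDerivAt_pow 2 t).div_const 2)).sub ((hasDerivAt_pow 4 t).div_const 24)).add
          ((hasDerivAt_pow 6 t).div_const 720))
        exact h1.congr_deriv (by push_cast; ring))
      (by norm_num)
      (fun t ht => by nlinarith [sin_le_quintic t ht])
      x hx
  linarith

/-- Core inequality: `3 sin x ≤ (2 + cos x) x` for `x > 0`. -/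
private lemma key_ineq : ∀ x : ℝ, 0 < x → 3 * Real.sin x ≤ (2 + Real.cos x) * x := by
  intro x hx
  rcases le_or_gt x 3 with h3 | h3
  · have h1 := sin_le_quintic x hx.le
    have h2 := cos_ge_sextic x hx.le
    have h2x := mul_le_mul_of_nonneg_right h2 hx.le
    have h12 : 0 ≤ x^5 * (12 - x^2) :=
      mul_nonneg (pow_nonneg hx.le 5) (by nlinarith)
    nlinarith [h2x, h12]
  · have h1 : Real.sin x ≤ 1 := Real.sin_le_one x
    have h2 : (-1:ℝ) ≤ Real.cos x := Real.neg_one_le_cos x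
    nlinarith

/-- In dimension 3, the log-log slope of the kernel is bounded by 2:
`z·|H₃'(z)| ≤ 2·H₃(z)` for all `z > 0`. -/
theorem H3_loglog_slope_bound :
    ∀ z > (0:ℝ), z * |deriv H₃ z| ≤ 2 * H₃ z := by
  intro z hz
  have hπ := Real.pi_pos
  set x : ℝ := 2 * π * z with hxdef
  have hx : 0 < x := by positivity
  -- derivative computation
  have hev : H₃ =ᶠ[nhds z] fun w => 1 - Real.sin (2 * π * w) / (2 * π * w) := by
    filter_upwards [eventually_ne_nhds hz.ne'] with w hw
    simp [H₃, hw]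
  have hnum : HasDerivAt (fun w => Real.sin (2 * π * w)) (2 * π * Real.cos x) z := by
    have hlin : HasDerivAt (fun w : ℝ => 2 * π * w) (2 * π) z := by
      simpa using (hasDerivAt_id z).const_mul (2 * π)
    have h : HasDerivAt (fun w => Real.sin (2 * π * w)) (Real.cos x * (2 * π)) z :=
      (Real.hasDerivAt_sin x).comp z hlin
    simpa [mul_comm (Real.cos x)] using h
  have hden : HasDerivAt (fun w : ℝ => 2 * π * w) (2 * π) z := by
    simpa using (hasDerivAt_id z).const_mul (2 * π)
  have hx0 : x ≠ 0 := hx.ne'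
  have hdiv : HasDerivAt (fun w => 1 - Real.sin (2 * π * w) / (2 * π * w))
      (-((2 * π * Real.cos x * x - Real.sin x * (2 * π)) / x ^ 2)) z :=
    (hnum.div hden hx0).const_sub 1
  have hderiv : deriv H₃ z = -((2 * π * Real.cos x * x - Real.sin x * (2 * π)) / x ^ 2) := by
    rw [Filter.EventuallyEq.deriv_eq hev]
    exact hdiv.deriv
  -- rewrite z * deriv
  have hz2pi : z = x / (2 * π) := by rw [hxdef]; field_simp
  have hzd : z * deriv H₃ z = Real.sin x / x - Real.cos x := by
    rw [hderiv, hz2pi]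
    field_simp
    ring
  set s : ℝ := Real.sin x / x with hs
  have hH : H₃ z = 1 - s := by
    simp [H₃, hz.ne', hs, hxdef]
  -- bounds
  have hsle : s ≤ 1 := by
    rw [hs, div_le_one hx]; exact Real.sin_le hx.le
  have hcle : Real.cos x ≤ 1 := Real.cos_le_one x
  have hkey : 3 * s ≤ 2 + Real.cos x := by
    calc 3 * s = 3 * Real.sin x / x := by rw [hs]; ring
      _ ≤ 2 + Real.cos x := by
          rw [div_le_iff₀ hx]; linarith [key_ineq x hx]
  have habs : |s - Real.cos x| ≤ 2 * (1 - s) := by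
    rw [abs_le]
    constructor <;> nlinarith
  calc z * |deriv H₃ z| = |z * deriv H₃ z| := by
        rw [abs_mul, abs_of_pos hz]
    _ = |s - Real.cos x| := by rw [hzd]
    _ ≤ 2 * (1 - s) := habs
    _ = 2 * H₃ z := by rw [hH]
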